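/- Let d ≥ 4 and 1 ≤ k < d−2. Let D^{d−1} ⊂ ℝ^{d−1} be the closed unit disc and let SO(d−2) act diagonally on (D^{d−1})^k, acting on each factor by rotations of ℝ^{d−1} fixing the first coordinate. Let X_d^k = (D^{d−1})^k / SO(d−2) and let ∂X_d^k ⊂ X_d^k be the image of ∂((D^{d−1})^k) (the set of k-tuples with at least one coordinate on the unit sphere S^{d−2}) under the quotient map. Then the inclusion ∂X_d^k ↪ X_d^k is a homotopy equivalence; in fact X_d^k deformation retracts onto ∂X_d^k. -/

import Mathlib

noncomputable section

/-- The property of being a rotation matrix (an element of `SO(d)`). -/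
def IsSOMat {d : ℕ} (A : Matrix (Fin d) (Fin d) ℝ) : Prop :=
  A * A.transpose = 1 ∧ A.det = 1

/-- A length vector: all entries positive. -/
def IsLengthVector {n : ℕ} (ℓ : Fin n → ℝ) : Prop := ∀ i, 0 < ℓ i

/-- A subset `J ⊆ {1,…,n}` is `ℓ`-short if `∑_{j∈J} ℓ_j < ∑_{i∉J} ℓ_i`. -/
def IsShort {n : ℕ} (ℓ : Fin n → ℝ) (J : Finset (Fin n)) : Prop :=
  ∑ j ∈ J, ℓ j < ∑ j ∈ Jᶜ, ℓ j

/-- A subset is `ℓ`-long if its complement is `ℓ`-short. -/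
def IsLong {n : ℕ} (ℓ : Fin n → ℝ) (J : Finset (Fin n)) : Prop :=
  IsShort ℓ Jᶜ

/-- `ℓ` is generic: no subset is `ℓ`-median. -/
def IsGeneric {n : ℕ} (ℓ : Fin n → ℝ) : Prop :=
  ∀ J : Finset (Fin n), ∑ j ∈ J, ℓ j ≠ ∑ j ∈ Jᶜ, ℓ j

/-- `a_k(ℓ)`, computed with respect to a dominating index `m`: the number of
`ℓ`-short subsets `J` containing `m` with `|J| = k + 1`. -/
def aCount {n : ℕ} (ℓ : Fin n → ℝ) (m : Fin n) (k : ℕ) : ℕ :=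
  Set.ncard {J : Finset (Fin n) | m ∈ J ∧ J.card = k + 1 ∧ IsShort ℓ J}

/-- The space of configurations whose quotient by the diagonal `SO(d)`-action is
the moduli space `M_d(ℓ)`: `n`-tuples of unit vectors in `ℝ^d` with `∑ ℓ_i z_i = 0`,
topologized as a subspace of the product. -/
abbrev LinkCfg (d n : ℕ) (ℓ : Fin n → ℝ) : Type :=
  {z : Fin n → EuclideanSpace ℝ (Fin d) // (∀ i, ‖z i‖ = 1) ∧ ∑ i, ℓ i • z i = 0}

/-- The orbit relation of the diagonal `SO(d)`-action on configurations. -/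
def soRel (d n : ℕ) (ℓ : Fin n → ℝ) (z w : LinkCfg d n ℓ) : Prop :=
  ∃ A : Matrix (Fin d) (Fin d) ℝ, IsSOMat A ∧
    ∀ i, (w : Fin n → EuclideanSpace ℝ (Fin d)) i =
      Matrix.toEuclideanLin A ((z : Fin n → EuclideanSpace ℝ (Fin d)) i)

/-- The moduli space `M_d(ℓ) = {z ∈ (S^{d-1})^n : ∑ ℓ_i z_i = 0}/SO(d)`,
with the quotient topology. -/
abbrev ModuliSpace (d n : ℕ) (ℓ : Fin n → ℝ) : Type := Quot (soRel d n ℓ)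

end

noncomputable section

/-- The last entry `ℓ_n` of a length vector. -/
def lastEntry {n : ℕ} (ℓ : Fin n → ℝ) : ℝ :=
  if h : 0 < n then ℓ ⟨n - 1, Nat.sub_lt h one_pos⟩ else 0

/-- The chain space `C_d(ℓ)`: tuples `(z_1,…,z_{n-1})` of unit vectors in `ℝ^d` with
`∑_{i=1}^{n-1} ℓ_i z_i = (-ℓ_n, 0, …, 0)`, topologized as a subspace of the product. -/
abbrev ChainCfg (d n : ℕ) (ℓ : Fin n → ℝ) : Type :=
  {z : Fin (n - 1) → EuclideanSpace ℝ (Fin d) //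
    (∀ i, ‖z i‖ = 1) ∧
    ∀ j : Fin d,
      (∑ i, ℓ (Fin.castLE (Nat.sub_le n 1) i) • z i) j =
        if (j : ℕ) = 0 then -lastEntry ℓ else 0}

/-- A `d × d` matrix fixes the first coordinate direction: its first column is `e₀`
and its first row is `e₀ᵀ`.  Together with `IsSOMat` this characterizes the copy of
`SO(d-1)` inside `SO(d)` acting on the last `d - 1` coordinates. -/
def FixesFirst {d : ℕ} (A : Matrix (Fin d) (Fin d) ℝ) : Prop :=
  (∀ j k : Fin d, (k : ℕ) = 0 → A j k = if (j : ℕ) = 0 then 1 else 0) ∧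
  (∀ j k : Fin d, (j : ℕ) = 0 → A j k = if (k : ℕ) = 0 then 1 else 0)

end

noncomputable section

/-- Tuples of `k` points of the closed unit disc `D^{d-1} ⊆ ℝ^{d-1}`. -/
abbrev DiscProd (d k : ℕ) : Type :=
  {x : Fin k → EuclideanSpace ℝ (Fin (d - 1)) // ∀ i, ‖x i‖ ≤ 1}

/-- The orbit relation of the diagonal `SO(d-2)`-action on `(D^{d-1})^k`, where
`SO(d-2)` acts on `ℝ^{d-1}` by rotations fixing the first coordinate. -/
def discRel (d k : ℕ) (x y : DiscProd d k) : Prop :=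
  ∃ A : Matrix (Fin (d - 1)) (Fin (d - 1)) ℝ, IsSOMat A ∧ FixesFirst A ∧
    ∀ i, (y : Fin k → EuclideanSpace ℝ (Fin (d - 1))) i =
      Matrix.toEuclideanLin A ((x : Fin k → EuclideanSpace ℝ (Fin (d - 1))) i)

/-- The quotient `X_d^k = (D^{d-1})^k / SO(d-2)` with the quotient topology. -/
abbrev DiscQuot (d k : ℕ) : Type := Quot (discRel d k)

/-- The subspace `∂X_d^k ⊆ X_d^k`: the image of the set of tuples having at least one
coordinate on the unit sphere. -/
def discQuotBoundary (d k : ℕ) : Set (DiscQuot d k) :=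
  Quot.mk (discRel d k) ''
    {x : DiscProd d k | ∃ i, ‖(x : Fin k → EuclideanSpace ℝ (Fin (d - 1))) i‖ = 1}

end

/-!
The orbit of a tuple `x` under the stabilizer of `e₀` in `SO(d - 1)` is determined by the Gram
matrix of `(e₀, x₁, …, xₖ)`: two families with equal Gram matrices differ by a linear isometry,
and since `k + 1 < d - 1` they span a proper subspace, so composing with a reflection fixing
that subspace makes the determinant `1`. Every positive semidefinite matrix occurs as a Gram
matrix, hence `X_d^k` is homeomorphic to the compact set of positive semidefinite
`(k + 1) × (k + 1)` matrices `G` with `G₀₀ = 1` and all `Gᵢᵢ ≤ 1`, and `∂X_d^k` corresponds to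
the matrices with `Gᵢᵢ = 1` for some `i ≥ 1`. Adding `t · minᵢ (1 - Gᵢᵢ)` to the diagonal
entries `i ≥ 1` stays in this set, reaches the boundary at `t = 1`, and fixes the boundary.
-/

open Matrix Module Submodule

section GramIsometry

variable {E : Type*} [NormedAddCommGroup E] [InnerProductSpace ℝ E]

theorem norm_linearCombination_eq_of_gram_eq {ι : Type*} [Fintype ι] {v w : ι → E}
    (h : gram ℝ v = gram ℝ w) (c : ι → ℝ) :
    ‖Fintype.linearCombination ℝ v c‖ = ‖Fintype.linearCombination ℝ w c‖ := by
  have key := star_dotProduct_gram_mulVec (𝕜 := ℝ) v c c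
  rw [h, star_dotProduct_gram_mulVec] at key
  simp only [Fintype.linearCombination_apply, real_inner_self_eq_norm_sq] at key ⊢
  exact (pow_left_inj₀ (norm_nonneg _) (norm_nonneg _) two_ne_zero).mp key.symm

theorem LinearMap.exists_linearIsometry_comp_eq_of_norm_eq [FiniteDimensional ℝ E]
    {V : Type*} [AddCommGroup V] [Module ℝ V] (P Q : V →ₗ[ℝ] E) (h : ∀ c, ‖P c‖ = ‖Q c‖) :
    ∃ F : E →ₗᵢ[ℝ] E, ∀ c, F (P c) = Q c := by
  have hker : LinearMap.ker P ≤ LinearMap.ker Q := fun c hc => by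
    rw [LinearMap.mem_ker, ← norm_eq_zero, ← h, norm_eq_zero, ← LinearMap.mem_ker]
    exact hc
  let L : LinearMap.range P →ₗ[ℝ] E :=
    (LinearMap.ker P).liftQ Q hker ∘ₗ P.quotKerEquivRange.symm.toLinearMap
  have hL : ∀ c, L ⟨P c, LinearMap.mem_range_self P c⟩ = Q c := fun c => by
    simp [L, LinearMap.quotKerEquivRange_symm_apply_image]
  let Li : LinearMap.range P →ₗᵢ[ℝ] E :=
    ⟨L, by rintro ⟨_, c, rfl⟩; rw [hL]; exact (h c).symm⟩
  refine ⟨Li.extend, fun c => ?_⟩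
  rw [show P c = ((⟨P c, LinearMap.mem_range_self P c⟩ : LinearMap.range P) : E) from rfl,
    LinearIsometry.extend_apply]
  exact hL c

theorem exists_linearIsometryEquiv_of_gram_eq [FiniteDimensional ℝ E] {ι : Type*} [Fintype ι]
    {v w : ι → E} (h : gram ℝ v = gram ℝ w) : ∃ F : E ≃ₗᵢ[ℝ] E, ∀ i, F (v i) = w i := by
  classical
  obtain ⟨F, hF⟩ := LinearMap.exists_linearIsometry_comp_eq_of_norm_eq _ _
    (norm_linearCombination_eq_of_gram_eq h)
  refine ⟨F.toLinearIsometryEquiv rfl, fun i => ?_⟩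
  simpa using hF (Pi.single i 1)

theorem LinearIsometryEquiv.det_eq_one_or_neg_one [FiniteDimensional ℝ E] (F : E ≃ₗᵢ[ℝ] E) :
    LinearMap.det F.toLinearMap = 1 ∨ LinearMap.det F.toLinearMap = -1 := by
  let b := stdOrthonormalBasis ℝ E
  rw [← LinearMap.det_toMatrix b.toBasis, ← mul_self_eq_one_iff]
  simpa using (Matrix.det_of_mem_unitary (F.toMatrix_mem_unitaryGroup b b)).2

theorem exists_linearIsometryEquiv_det_eq_neg_one_fixing [FiniteDimensional ℝ E]
    {K : Submodule ℝ E} (hK : K ≠ ⊤) :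
    ∃ R : E ≃ₗᵢ[ℝ] E, LinearMap.det R.toLinearMap = -1 ∧ ∀ x ∈ K, R x = x := by
  obtain ⟨v, hvK, hv⟩ := (Submodule.ne_bot_iff _).mp (Submodule.orthogonal_eq_bot_iff.not.mpr hK)
  refine ⟨(ℝ ∙ v)ᗮ.reflection, ?_, fun x hx => ?_⟩
  · rw [Submodule.det_reflection, Submodule.orthogonal_orthogonal, finrank_span_singleton hv]
    norm_num
  · refine Submodule.reflection_mem_subspace_eq_self ?_
    rw [Submodule.mem_orthogonal_singleton_iff_inner_right, real_inner_comm]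
    exact Submodule.inner_right_of_mem_orthogonal hx hvK

theorem exists_linearIsometryEquiv_det_eq_one_of_gram_eq [FiniteDimensional ℝ E] {ι : Type*}
    [Fintype ι] {v w : ι → E} (h : gram ℝ v = gram ℝ w) (hw : span ℝ (Set.range w) ≠ ⊤) :
    ∃ F : E ≃ₗᵢ[ℝ] E, LinearMap.det F.toLinearMap = 1 ∧ ∀ i, F (v i) = w i := by
  obtain ⟨F, hF⟩ := exists_linearIsometryEquiv_of_gram_eq h
  rcases F.det_eq_one_or_neg_one with hdet | hdet
  · exact ⟨F, hdet, hF⟩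
  obtain ⟨R, hRdet, hR⟩ := exists_linearIsometryEquiv_det_eq_neg_one_fixing hw
  refine ⟨F.trans R, ?_, fun i => ?_⟩
  · change LinearMap.det (R.toLinearMap ∘ₗ F.toLinearMap) = 1
    rw [LinearMap.det_comp, hRdet, hdet]
    norm_num
  · rw [LinearIsometryEquiv.trans_apply, hF, hR _ (subset_span (Set.mem_range_self i))]

theorem exists_gram_eq_of_posSemidef {ι : Type*} [Fintype ι] {u : ι → E} (hu : Orthonormal ℝ u)
    {G : Matrix ι ι ℝ} (hG : G.PosSemidef) : ∃ v : ι → E, gram ℝ v = G := by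
  classical
  obtain ⟨B, rfl⟩ : ∃ B : Matrix ι ι ℝ, G = star B * B := by
    open scoped MatrixOrder in exact CStarAlgebra.nonneg_iff_eq_star_mul_self.mp hG.nonneg
  refine ⟨fun i => ∑ l, B l i • u l, ?_⟩
  ext i j
  rw [gram_apply, hu.inner_sum, mul_apply]
  simp

end GramIsometry

theorem span_range_ne_top_of_card_lt {K V : Type*} [DivisionRing K] [AddCommGroup V] [Module K V]
    [FiniteDimensional K V] {ι : Type*} [Fintype ι] (w : ι → V) (h : Fintype.card ι < finrank K V) :
    span K (Set.range w) ≠ ⊤ := fun htop => by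
  have := finrank_range_le_card (R := K) w
  rw [Set.finrank, htop, finrank_top] at this
  omega

section OrthogonalMatrix

variable {n : ℕ}

theorem exists_isSOMat_toEuclideanLin_eq
    (F : EuclideanSpace ℝ (Fin n) ≃ₗᵢ[ℝ] EuclideanSpace ℝ (Fin n))
    (hF : LinearMap.det F.toLinearMap = 1) :
    ∃ A : Matrix (Fin n) (Fin n) ℝ, IsSOMat A ∧ toEuclideanLin A = F.toLinearMap := by
  let b := EuclideanSpace.basisFun (Fin n) ℝ
  refine ⟨LinearMap.toMatrix b.toBasis b.toBasis F.toLinearMap, ⟨?_, ?_⟩, ?_⟩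
  · have := F.toMatrix_mem_unitaryGroup b b
    rwa [Matrix.mem_unitaryGroup_iff, Matrix.star_eq_conjTranspose,
      Matrix.conjTranspose_eq_transpose_of_trivial] at this
  · rw [LinearMap.det_toMatrix, hF]
  · rw [Matrix.toEuclideanLin_eq_toLin_orthonormal, Matrix.toLin_toMatrix]

theorem exists_isSOMat_of_gram_eq {ι : Type*} [Fintype ι]
    {v w : ι → EuclideanSpace ℝ (Fin n)} (h : gram ℝ v = gram ℝ w)
    (hw : span ℝ (Set.range w) ≠ ⊤) :
    ∃ A : Matrix (Fin n) (Fin n) ℝ, IsSOMat A ∧ ∀ i, toEuclideanLin A (v i) = w i := by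
  obtain ⟨F, hFdet, hF⟩ := exists_linearIsometryEquiv_det_eq_one_of_gram_eq h hw
  obtain ⟨A, hA, hAF⟩ := exists_isSOMat_toEuclideanLin_eq F hFdet
  exact ⟨A, hA, fun i => by rw [hAF]; exact hF i⟩

theorem gram_toEuclideanLin_comp {A : Matrix (Fin n) (Fin n) ℝ} (hA : A * Aᵀ = 1) {ι : Type*}
    (v : ι → EuclideanSpace ℝ (Fin n)) : gram ℝ (toEuclideanLin A ∘ v) = gram ℝ v := by
  ext i j
  simp only [gram_apply, Function.comp_apply, EuclideanSpace.inner_eq_star_dotProduct,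
    toLpLin_apply, star_trivial]
  rw [dotProduct_mulVec, ← mulVec_transpose, mulVec_mulVec, mul_eq_one_comm.mp hA, one_mulVec]

def firstVec (n : ℕ) : EuclideanSpace ℝ (Fin n) :=
  WithLp.toLp 2 fun j => if (j : ℕ) = 0 then 1 else 0

theorem ofLp_firstVec_succ (m : ℕ) : (firstVec (m + 1)).ofLp = Pi.single 0 1 := by
  ext j
  simp only [firstVec, Pi.single_apply, Fin.ext_iff, Fin.val_zero]

theorem norm_firstVec (hn : 0 < n) : ‖firstVec n‖ = 1 := by
  obtain ⟨m, rfl⟩ : ∃ m, n = m + 1 := ⟨n - 1, by omega⟩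
  rw [show firstVec (m + 1) = EuclideanSpace.single 0 1 from
    congrArg (WithLp.toLp 2) (ofLp_firstVec_succ m)]
  simp

theorem mulVec_firstVec_eq_self_iff {A : Matrix (Fin n) (Fin n) ℝ} :
    A *ᵥ (firstVec n).ofLp = (firstVec n).ofLp ↔
      ∀ j k : Fin n, (k : ℕ) = 0 → A j k = if (j : ℕ) = 0 then 1 else 0 := by
  rcases n with _ | m
  · simp [funext_iff]
  · simp only [ofLp_firstVec_succ, mulVec_single_one, funext_iff,
      Fin.val_eq_zero_iff, forall_eq, Pi.single_apply]
    rfl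

theorem fixesFirst_iff {A : Matrix (Fin n) (Fin n) ℝ} :
    FixesFirst A ↔ A *ᵥ (firstVec n).ofLp = (firstVec n).ofLp ∧
      Aᵀ *ᵥ (firstVec n).ofLp = (firstVec n).ofLp := by
  rw [mulVec_firstVec_eq_self_iff, mulVec_firstVec_eq_self_iff]
  exact and_congr Iff.rfl forall_comm

theorem fixesFirst_of_mulVec_firstVec {A : Matrix (Fin n) (Fin n) ℝ} (hA : A * Aᵀ = 1)
    (h : A *ᵥ (firstVec n).ofLp = (firstVec n).ofLp) : FixesFirst A := by
  refine fixesFirst_iff.mpr ⟨h, ?_⟩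
  conv_lhs => rw [← h, mulVec_mulVec, mul_eq_one_comm.mp hA, one_mulVec]

end OrthogonalMatrix

section StrongDeformationRetract

open unitInterval

variable {X Y : Type*} [TopologicalSpace X] [TopologicalSpace Y]

def IsStrongDeformationRetract (A : Set X) : Prop :=
  ∃ H : C(X × I, X), (∀ x, H (x, 0) = x) ∧ (∀ x, H (x, 1) ∈ A) ∧ ∀ x ∈ A, ∀ t, H (x, t) = x

theorem IsStrongDeformationRetract.exists_homotopyEquiv {A : Set X}
    (hA : IsStrongDeformationRetract A) :
    ∃ e : ContinuousMap.HomotopyEquiv A X, ∀ y : A, e.toFun y = y := by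
  obtain ⟨H, H0, H1, Hfix⟩ := hA
  let r : C(X, A) := ⟨fun x => ⟨H (x, 1), H1 x⟩, by fun_prop⟩
  refine ⟨⟨⟨Subtype.val, continuous_subtype_val⟩, r, ?_, ?_⟩, fun _ => rfl⟩
  · have : r.comp ⟨Subtype.val, continuous_subtype_val⟩ = ContinuousMap.id A := by
      ext y
      exact Hfix y y.2 1
    rw [this]
  · exact ⟨⟨⟨fun p => H (p.2, σ p.1), by fun_prop⟩, fun x => by simp [r],
      fun x => by simpa using H0 x⟩⟩

theorem IsStrongDeformationRetract.preimage_homeomorph (e : X ≃ₜ Y) {B : Set Y}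
    (hB : IsStrongDeformationRetract B) : IsStrongDeformationRetract (e ⁻¹' B) := by
  obtain ⟨H, H0, H1, Hfix⟩ := hB
  refine ⟨⟨fun p => e.symm (H (e p.1, p.2)), by fun_prop⟩, fun x => ?_, fun x => ?_,
    fun x hx t => ?_⟩
  · simp [H0]
  · simpa using H1 (e x)
  · simp [Hfix (e x) hx t]

end StrongDeformationRetract

noncomputable section DiscGram

variable {d k : ℕ}

def discGram (d k : ℕ) (x : DiscProd d k) : Matrix (Fin (k + 1)) (Fin (k + 1)) ℝ :=
  gram ℝ (Fin.cons (firstVec (d - 1)) x.1)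

def gramSet (k : ℕ) : Set (Matrix (Fin (k + 1)) (Fin (k + 1)) ℝ) :=
  {G | G.PosSemidef ∧ G 0 0 = 1 ∧ ∀ i, G i i ≤ 1}

theorem discGram_succ_succ (x : DiscProd d k) (i : Fin k) :
    discGram d k x i.succ i.succ = ‖x.1 i‖ ^ 2 := by
  simp [discGram, gram_apply]

theorem exists_norm_eq_one_iff_discGram (x : DiscProd d k) :
    (∃ i, ‖x.1 i‖ = 1) ↔ ∃ i : Fin k, discGram d k x i.succ i.succ = 1 := by
  simp only [discGram_succ_succ, pow_eq_one_iff_of_nonneg (norm_nonneg _) two_ne_zero]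

theorem discGram_eq_of_discRel {x y : DiscProd d k} (h : discRel d k x y) :
    discGram d k x = discGram d k y := by
  obtain ⟨A, hA, hfix, hxy⟩ := h
  have he : toEuclideanLin A (firstVec (d - 1)) = firstVec (d - 1) := by
    rw [toLpLin_apply, (fixesFirst_iff.mp hfix).1]
  have : Fin.cons (firstVec (d - 1)) y.1 = toEuclideanLin A ∘ Fin.cons (firstVec (d - 1)) x.1 := by
    rw [Fin.comp_cons, he]
    congr 1
    exact funext hxy
  rw [discGram, discGram, this, gram_toEuclideanLin_comp hA.1]

theorem discRel_of_discGram_eq (hkd : k + 1 < d - 1) {x y : DiscProd d k}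
    (h : discGram d k x = discGram d k y) : discRel d k x y := by
  have hspan := span_range_ne_top_of_card_lt (Fin.cons (firstVec (d - 1)) y.1)
    (by rwa [Fintype.card_fin, finrank_euclideanSpace_fin])
  obtain ⟨A, hA, hAxy⟩ := exists_isSOMat_of_gram_eq h hspan
  have he := hAxy 0
  simp only [Fin.cons_zero] at he
  refine ⟨A, hA, fixesFirst_of_mulVec_firstVec hA.1 ?_, fun i => ?_⟩
  · simpa [toLpLin_apply] using congrArg WithLp.ofLp he
  · simpa using (hAxy i.succ).symm

theorem discGram_mem_gramSet (hd : 1 < d) (x : DiscProd d k) : discGram d k x ∈ gramSet k := by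
  have h00 : discGram d k x 0 0 = 1 := by
    simp [discGram, gram_apply, norm_firstVec (by omega : 0 < d - 1)]
  refine ⟨posSemidef_gram ℝ _, h00, fun i => Fin.cases h00.le (fun i => ?_) i⟩
  rw [discGram_succ_succ]
  exact pow_le_one₀ (norm_nonneg _) (x.2 i)

theorem exists_discGram_eq (hkd : k + 1 ≤ d - 1) {G : Matrix (Fin (k + 1)) (Fin (k + 1)) ℝ}
    (hG : G ∈ gramSet k) : ∃ x : DiscProd d k, discGram d k x = G := by
  obtain ⟨hpsd, h00, hdiag⟩ := hG
  obtain ⟨w, rfl⟩ := exists_gram_eq_of_posSemidef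
    ((EuclideanSpace.basisFun (Fin (d - 1)) ℝ).orthonormal.comp _ (Fin.castLE_injective hkd)) hpsd
  have hw0 : ‖w 0‖ = 1 := by
    rw [gram_apply, real_inner_self_eq_norm_sq] at h00
    exact (pow_eq_one_iff_of_nonneg (norm_nonneg _) two_ne_zero).mp h00
  obtain ⟨F, hF⟩ := exists_linearIsometryEquiv_of_gram_eq (v := ![w 0]) (w := ![firstVec (d - 1)])
    (by
      ext i j
      fin_cases i; fin_cases j
      simp [gram_apply, hw0, norm_firstVec (by omega : 0 < d - 1)])
  refine ⟨⟨fun i => F (w i.succ), fun i => ?_⟩, ?_⟩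
  · have := hdiag i.succ
    rw [gram_apply, real_inner_self_eq_norm_sq] at this
    rw [LinearIsometryEquiv.norm_map]
    exact (pow_le_one_iff_of_nonneg (norm_nonneg _) two_ne_zero).mp this
  · have hcons : Fin.cons (firstVec (d - 1)) (fun i => F (w i.succ)) = F ∘ w := by
      have h0 : F (w 0) = firstVec (d - 1) := by simpa using hF 0
      rw [← Fin.cons_self_tail (F ∘ w), Function.comp_apply, h0]
      rfl
    ext i j
    simp [discGram, hcons, gram_apply]

theorem continuous_discGram : Continuous (discGram d k) := by
  have hcons : Continuous fun x : DiscProd d k =>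
      (Fin.cons (firstVec (d - 1)) x.1 : Fin (k + 1) → EuclideanSpace ℝ (Fin (d - 1))) :=
    continuous_const.finCons continuous_subtype_val
  exact continuous_matrix fun i j =>
    ((continuous_apply i).comp hcons).inner ((continuous_apply j).comp hcons)

end DiscGram

noncomputable section GramSetDeformation

open Finset unitInterval

variable {k : ℕ}

def gramSetBoundary (k : ℕ) : Set (gramSet k) := {G | ∃ i : Fin k, G.1 i.succ i.succ = 1}

def gramRaise (G : Matrix (Fin (k + 1)) (Fin (k + 1)) ℝ) (s : ℝ) :
    Matrix (Fin (k + 1)) (Fin (k + 1)) ℝ :=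
  G + s • Matrix.diagonal (Fin.cons 0 1)

theorem gramRaise_succ_succ (G : Matrix (Fin (k + 1)) (Fin (k + 1)) ℝ) (s : ℝ) (i : Fin k) :
    gramRaise G s i.succ i.succ = G i.succ i.succ + s := by
  simp [gramRaise]

theorem gramRaise_mem_gramSet {G : Matrix (Fin (k + 1)) (Fin (k + 1)) ℝ} (hG : G ∈ gramSet k)
    {s : ℝ} (hs0 : 0 ≤ s) (hs : ∀ i : Fin k, G i.succ i.succ + s ≤ 1) :
    gramRaise G s ∈ gramSet k := by
  obtain ⟨hpsd, h00, hdiag⟩ := hG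
  refine ⟨hpsd.add ((Matrix.PosSemidef.diagonal ?_).smul hs0), by simp [gramRaise, h00],
    fun i => Fin.cases (by simp [gramRaise, h00]) (fun i => ?_) i⟩
  · intro i
    refine Fin.cases le_rfl (fun _ => zero_le_one) i
  · rw [gramRaise_succ_succ]
    exact hs i

variable [NeZero k]

def gramSlack (G : Matrix (Fin (k + 1)) (Fin (k + 1)) ℝ) : ℝ :=
  univ.inf' univ_nonempty fun i : Fin k => 1 - G i.succ i.succ

theorem continuous_gramSlack : Continuous (gramSlack (k := k)) :=
  Continuous.finset_inf'_apply _ fun i _ =>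
    continuous_const.sub (continuous_id.matrix_elem i.succ i.succ)

theorem gramSlack_le (G : Matrix (Fin (k + 1)) (Fin (k + 1)) ℝ) (i : Fin k) :
    gramSlack G ≤ 1 - G i.succ i.succ :=
  inf'_le _ (mem_univ i)

theorem gramSlack_nonneg {G : Matrix (Fin (k + 1)) (Fin (k + 1)) ℝ} (hG : G ∈ gramSet k) :
    0 ≤ gramSlack G :=
  le_inf' _ _ fun i _ => sub_nonneg.mpr (hG.2.2 i.succ)

theorem exists_gramSlack_eq (G : Matrix (Fin (k + 1)) (Fin (k + 1)) ℝ) :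
    ∃ i : Fin k, gramSlack G = 1 - G i.succ i.succ := by
  obtain ⟨i, -, hi⟩ := exists_mem_eq_inf' (univ_nonempty (α := Fin k))
    fun i : Fin k => 1 - G i.succ i.succ
  exact ⟨i, hi⟩

theorem gramRaise_mul_gramSlack_mem_gramSet {G : Matrix (Fin (k + 1)) (Fin (k + 1)) ℝ}
    (hG : G ∈ gramSet k) {t : ℝ} (ht0 : 0 ≤ t) (ht1 : t ≤ 1) :
    gramRaise G (t * gramSlack G) ∈ gramSet k :=
  gramRaise_mem_gramSet hG (mul_nonneg ht0 (gramSlack_nonneg hG)) fun i => by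
    linarith [gramSlack_le G i, mul_le_of_le_one_left (gramSlack_nonneg hG) ht1]

theorem isStrongDeformationRetract_gramSetBoundary :
    IsStrongDeformationRetract (gramSetBoundary k) := by
  let H : C(gramSet k × I, gramSet k) :=
    ⟨fun p => ⟨gramRaise p.1.1 (p.2 * gramSlack p.1.1),
      gramRaise_mul_gramSlack_mem_gramSet p.1.2 p.2.2.1 p.2.2.2⟩, by
      have := continuous_gramSlack (k := k)
      unfold gramRaise
      fun_prop⟩
  refine ⟨H, fun G => ?_, fun G => ?_, fun G hG t => ?_⟩
  · ext1
    simp [H, gramRaise]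
  · obtain ⟨i, hi⟩ := exists_gramSlack_eq G.1
    refine ⟨i, ?_⟩
    simp only [H, ContinuousMap.coe_mk, gramRaise_succ_succ, Set.Icc.coe_one, one_mul, hi]
    ring
  · obtain ⟨i, hi⟩ := hG
    have hslack : gramSlack G.1 = 0 :=
      le_antisymm (by simpa [hi] using gramSlack_le G.1 i) (gramSlack_nonneg G.2)
    ext1
    simp [H, gramRaise, hslack]

end GramSetDeformation

noncomputable section DiscQuotHomeomorph

variable {d k : ℕ}

instance instCompactSpaceDiscProd : CompactSpace (DiscProd d k) := by
  refine (isCompact_iff_compactSpace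
    (s := {x : Fin k → EuclideanSpace ℝ (Fin (d - 1)) | ∀ i, ‖x i‖ ≤ 1})).mp ?_
  have : {x : Fin k → EuclideanSpace ℝ (Fin (d - 1)) | ∀ i, ‖x i‖ ≤ 1} =
      Set.univ.pi fun _ => Metric.closedBall 0 1 := by
    ext x
    simp [Set.mem_pi]
  rw [this]
  exact isCompact_univ_pi fun _ => isCompact_closedBall _ _

def discQuotGram (d k : ℕ) : DiscQuot d k → Matrix (Fin (k + 1)) (Fin (k + 1)) ℝ :=
  Quot.lift (discGram d k) fun _ _ => discGram_eq_of_discRel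

theorem discQuotGram_injective (hkd : k + 1 < d - 1) : Function.Injective (discQuotGram d k) := by
  rintro ⟨x⟩ ⟨y⟩ h
  exact Quot.sound (discRel_of_discGram_eq hkd h)

theorem range_discQuotGram (hkd : k + 1 < d - 1) : Set.range (discQuotGram d k) = gramSet k := by
  refine Set.Subset.antisymm ?_ fun G hG => ?_
  · rintro _ ⟨⟨x⟩, rfl⟩
    exact discGram_mem_gramSet (by omega) x
  · obtain ⟨x, hx⟩ := exists_discGram_eq hkd.le hG
    exact ⟨Quot.mk _ x, hx⟩

def discQuotHomeomorph (hkd : k + 1 < d - 1) : DiscQuot d k ≃ₜ gramSet k :=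
  Continuous.homeoOfEquivCompactToT2
    (f := (Equiv.ofInjective _ (discQuotGram_injective hkd)).trans
      (Equiv.setCongr (range_discQuotGram hkd)))
    ((continuous_quot_lift _ continuous_discGram).subtype_mk _)

theorem discQuotHomeomorph_mk (hkd : k + 1 < d - 1) (x : DiscProd d k) :
    (discQuotHomeomorph hkd (Quot.mk _ x) : Matrix (Fin (k + 1)) (Fin (k + 1)) ℝ) =
      discGram d k x :=
  rfl

theorem discQuotBoundary_eq_preimage (hkd : k + 1 < d - 1) :
    discQuotBoundary d k = discQuotHomeomorph hkd ⁻¹' gramSetBoundary k := by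
  ext q
  constructor
  · rintro ⟨x, hx, rfl⟩
    simpa [gramSetBoundary, discQuotHomeomorph_mk, exists_norm_eq_one_iff_discGram] using hx
  · induction q using Quot.ind with | mk x => ?_
    intro hx
    refine ⟨x, ?_, rfl⟩
    simpa [gramSetBoundary, discQuotHomeomorph_mk, exists_norm_eq_one_iff_discGram] using hx

end DiscQuotHomeomorph

open unitInterval in
theorem discQuot_deformation_retracts_onto_boundary_general (d k : ℕ)
    (hk : 1 ≤ k) (hkd : k < d - 2) :
    (∃ e : ContinuousMap.HomotopyEquiv (discQuotBoundary d k) (DiscQuot d k),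
      ∀ y : discQuotBoundary d k, e.toFun y = (y : DiscQuot d k)) ∧
    (∃ H : C(DiscQuot d k × unitInterval, DiscQuot d k),
      (∀ x, H (x, 0) = x) ∧
      (∀ x, H (x, 1) ∈ discQuotBoundary d k) ∧
      (∀ x ∈ discQuotBoundary d k, ∀ t, H (x, t) = x)) := by
  have : NeZero k := ⟨by omega⟩
  have hkd' : k + 1 < d - 1 := by omega
  have h : IsStrongDeformationRetract (discQuotBoundary d k) := by
    rw [discQuotBoundary_eq_preimage hkd']
    exact isStrongDeformationRetract_gramSetBoundary.preimage_homeomorph _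
  exact ⟨h.exists_homotopyEquiv, h⟩

open unitInterval in
/-- For `d ≥ 4` and `1 ≤ k < d − 2`, the inclusion
`∂X_d^k ↪ X_d^k` is a homotopy equivalence; in fact `X_d^k` (strongly) deformation
retracts onto `∂X_d^k`. -/
theorem discQuot_deformation_retracts_onto_boundary (d k : ℕ) (hd : 4 ≤ d)
    (hk : 1 ≤ k) (hkd : k < d - 2) :
    (∃ e : ContinuousMap.HomotopyEquiv (discQuotBoundary d k) (DiscQuot d k),
      ∀ y : discQuotBoundary d k, e.toFun y = (y : DiscQuot d k)) ∧
    (∃ H : C(DiscQuot d k × unitInterval, DiscQuot d k),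
      (∀ x, H (x, 0) = x) ∧
      (∀ x, H (x, 1) ∈ discQuotBoundary d k) ∧
      (∀ x ∈ discQuotBoundary d k, ∀ t, H (x, t) = x)) :=
  discQuot_deformation_retracts_onto_boundary_general d k hk hkd
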